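/- Let μ be a probability measure on ℝ^d with bounded continuous density f, f(x) > 0, and let K(x,x',σ) = exp(−w(σ‖x−x'‖^θ)) with w satisfying the input kernel conditions (w increasing, w → ∞, w'(t)+t·w''(t) ≥ 0, ∫₀^∞ t^{d-1} w(t^θ) e^{−w(t^θ)} dt < ∞). Define F(x,σ) = ∫ [K/∫K dμ] · log[K/∫K dμ] dμ(x') + log ρ for ρ ∈ (0,1). Then there exists a constant C > 0 such that F(x,σ) ≥ C log σ − log f(x) + log ρ for σ sufficiently large. -/

import Mathlib

open MeasureTheory Filter

/-- The generalized input kernel `K(x,x',σ) = exp(-w(σ‖x-x'‖^θ))`. -/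
noncomputable def inputKernel {d : ℕ} (w : ℝ → ℝ) (θ : ℝ)
    (x x' : EuclideanSpace ℝ (Fin d)) (σ : ℝ) : ℝ :=
  Real.exp (-(w (σ * ‖x - x'‖ ^ θ)))

/-- The continuum entropy functional
`F(x,σ) = ∫ (K/∫K dμ) log (K/∫K dμ) dμ(x') + log ρ`. -/
noncomputable def entropyF {d : ℕ} (w : ℝ → ℝ) (θ ρ : ℝ)
    (μ : Measure (EuclideanSpace ℝ (Fin d)))
    (x : EuclideanSpace ℝ (Fin d)) (σ : ℝ) : ℝ :=
  (∫ x', (inputKernel w θ x x' σ / ∫ x'', inputKernel w θ x x'' σ ∂μ) *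
      Real.log (inputKernel w θ x x' σ / ∫ x'', inputKernel w θ x x'' σ ∂μ) ∂μ)
    + Real.log ρ


/-!
Write `K = exp (-u)` with `u y = w (σ ‖x - y‖ ^ θ)` and `I = ∫ K dμ`. Then the integral in `F`
equals `-(∫ u K dμ) / I - log I`. The density of `μ` is at most `M` everywhere and at least
`f x / 2` near `x`, and the dilation `y ↦ σ ^ θ⁻¹ • y` turns `K` into a fixed radial profile,
integrable by the integrability hypothesis on `w`. Hence `∫ u K dμ ≤ c₃ σ^(-d/θ)` and
`c₂ σ^(-d/θ) ≤ I ≤ c₁ σ^(-d/θ)`, the lower bound coming from the ball of radius `σ^(-1/θ)` around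
`x`, on which `K ≥ exp (-max_{[0,1]} w)`. So `F ≥ (d/θ) log σ + A + log ρ`, and `C = d/(2θ)` works
for large `σ`.
-/

open Set Metric Module NNReal

lemma mul_norm_rpow_eq_norm_smul_rpow {E : Type*} [NormedAddCommGroup E] [NormedSpace ℝ E]
    {θ σ : ℝ} (hθ : 0 < θ) (hσ : 0 ≤ σ) (y : E) :
    σ * ‖y‖ ^ θ = ‖σ ^ θ⁻¹ • y‖ ^ θ := by
  rw [norm_smul, Real.norm_of_nonneg (Real.rpow_nonneg hσ _),
    Real.mul_rpow (Real.rpow_nonneg hσ _) (norm_nonneg _), ← Real.rpow_mul hσ,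
    inv_mul_cancel₀ hθ.ne', Real.rpow_one]

section Scaling

variable {E : Type*} [NormedAddCommGroup E] [NormedSpace ℝ E] [FiniteDimensional ℝ E]
  [MeasurableSpace E] [BorelSpace E] {ν : Measure E} [ν.IsAddHaarMeasure] {θ σ : ℝ}

lemma integral_comp_mul_norm_sub_rpow (φ : ℝ → ℝ) (hθ : 0 < θ) (hσ : 0 < σ) (x : E) :
    ∫ y, φ (σ * ‖x - y‖ ^ θ) ∂ν = σ ^ (-(finrank ℝ E / θ)) * ∫ y, φ (‖y‖ ^ θ) ∂ν := by
  simp_rw [norm_sub_rev x]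
  rw [integral_sub_right_eq_self (fun y => φ (σ * ‖y‖ ^ θ)) x]
  simp_rw [mul_norm_rpow_eq_norm_smul_rpow hθ hσ.le]
  rw [Measure.integral_comp_smul ν (fun y => φ (‖y‖ ^ θ)), smul_eq_mul, ← Real.rpow_natCast,
    ← Real.rpow_mul hσ.le, ← Real.rpow_neg hσ.le, abs_of_pos (Real.rpow_pos_of_pos hσ _)]
  congr 2
  ring

lemma MeasureTheory.Integrable.comp_mul_norm_sub_rpow {φ : ℝ → ℝ}
    (h : Integrable (fun y => φ (‖y‖ ^ θ)) ν) (hθ : 0 < θ) (hσ : 0 < σ) (x : E) :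
    Integrable (fun y => φ (σ * ‖x - y‖ ^ θ)) ν := by
  simp_rw [norm_sub_rev x, mul_norm_rpow_eq_norm_smul_rpow hθ hσ.le]
  exact (h.comp_smul (Real.rpow_pos_of_pos hσ _).ne').comp_sub_right x

end Scaling

section Comparison

variable {α : Type*} [MeasurableSpace α] {μ ν : Measure α}

lemma integral_le_mul_integral_of_le_smul {c : ℝ≥0} (h : μ ≤ c • ν) {g : α → ℝ} (hg0 : 0 ≤ g)
    (hg : Integrable g ν) : ∫ a, g a ∂μ ≤ c * ∫ a, g a ∂ν := by
  calc ∫ a, g a ∂μ ≤ ∫ a, g a ∂(c • ν) :=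
        integral_mono_measure h (ae_of_all _ hg0) hg.smul_measure_nnreal
    _ = c * ∫ a, g a ∂ν := by rw [integral_smul_nnreal_measure, NNReal.smul_def, smul_eq_mul]

lemma withDensity_ofReal_le_smul {f : α → ℝ} {M : ℝ≥0} (hf : ∀ a, f a ≤ M) :
    ν.withDensity (fun a => ENNReal.ofReal (f a)) ≤ M • ν := by
  rw [ENNReal.smul_def, ← withDensity_const]
  exact withDensity_mono (ae_of_all _ fun a => by simpa using ENNReal.ofReal_le_ofReal (hf a))

lemma smul_restrict_le_withDensity_ofReal {f : α → ℝ} {m : ℝ≥0} {s : Set α} (hs : MeasurableSet s)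
    (hf : ∀ a ∈ s, m ≤ f a) : m • ν.restrict s ≤ ν.withDensity (fun a => ENNReal.ofReal (f a)) := by
  rw [ENNReal.smul_def, ← withDensity_const, ← withDensity_indicator hs]
  refine withDensity_mono (ae_of_all _ fun a => ?_)
  by_cases ha : a ∈ s
  · simpa [ha] using ENNReal.ofReal_le_ofReal (hf a ha)
  · simp [ha]

end Comparison

lemma integrableOn_Ioi_pow_mul_exp_neg_comp_rpow {w : ℝ → ℝ} {θ : ℝ} {k : ℕ} (hθ : 0 < θ)
    (hwc : ContinuousOn w (Ici 0)) (hwlim : Tendsto w atTop atTop)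
    (hint : IntegrableOn (fun t => t ^ k * w (t ^ θ) * Real.exp (-w (t ^ θ))) (Ioi 0)) :
    IntegrableOn (fun t => t ^ k * Real.exp (-w (t ^ θ))) (Ioi 0) := by
  have hcont : ContinuousOn (fun t : ℝ => t ^ k * Real.exp (-w (t ^ θ))) (Ici 0) :=
    (continuous_pow k).continuousOn.mul (hwc.comp (Real.continuous_rpow_const hθ.le).continuousOn
      fun t ht => Real.rpow_nonneg ht _).neg.rexp
  obtain ⟨T, hT⟩ := eventually_atTop.1
    ((hwlim.comp (tendsto_rpow_atTop hθ)).eventually_ge_atTop 1)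
  set T' := max T 0
  have hhead : IntegrableOn (fun t : ℝ => t ^ k * Real.exp (-w (t ^ θ))) (Icc 0 T') :=
    (hcont.mono Icc_subset_Ici_self).integrableOn_Icc
  -- on the tail `w ≥ 1`, so the integrand is dominated by the one of `hint`
  have htail : IntegrableOn (fun t : ℝ => t ^ k * Real.exp (-w (t ^ θ))) (Ioi T') := by
    refine Integrable.mono' (hint.mono_set (Ioi_subset_Ioi (le_max_right _ _)))
      ((hcont.mono fun t ht => (le_max_right T 0).trans (le_of_lt ht)).aestronglyMeasurable
        measurableSet_Ioi) (ae_restrict_of_forall_mem measurableSet_Ioi fun t ht => ?_)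
    have ht0 : 0 ≤ t := (le_max_right T 0).trans (le_of_lt ht)
    rw [Real.norm_of_nonneg (by positivity), mul_assoc]
    exact mul_le_mul_of_nonneg_left
      (le_mul_of_one_le_left (Real.exp_pos _).le (hT t ((le_max_left T 0).trans ht.le)))
      (by positivity)
  exact (hhead.union htail).mono_set
    (by rw [Icc_union_Ioi_eq_Ici (le_max_right T 0)]; exact Ioi_subset_Ici_self)

lemma integral_mul_log_gibbs_eq {α : Type*} [MeasurableSpace α] {μ : Measure α} {u : α → ℝ}
    (hK : Integrable (fun a => Real.exp (-u a)) μ)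
    (huK : Integrable (fun a => u a * Real.exp (-u a)) μ)
    (hZ : 0 < ∫ a, Real.exp (-u a) ∂μ) :
    ∫ a, Real.exp (-u a) / (∫ b, Real.exp (-u b) ∂μ) *
        Real.log (Real.exp (-u a) / ∫ b, Real.exp (-u b) ∂μ) ∂μ =
      -((∫ a, u a * Real.exp (-u a) ∂μ) / ∫ a, Real.exp (-u a) ∂μ) -
        Real.log (∫ a, Real.exp (-u a) ∂μ) := by
  set Z := ∫ a, Real.exp (-u a) ∂μ
  have hpoint : ∀ a, Real.exp (-u a) / Z * Real.log (Real.exp (-u a) / Z) =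
      -Z⁻¹ * (u a * Real.exp (-u a)) - Real.log Z / Z * Real.exp (-u a) := fun a => by
    rw [Real.log_div (Real.exp_pos _).ne' hZ.ne', Real.log_exp]
    ring
  simp_rw [hpoint]
  rw [integral_sub (huK.const_mul _) (hK.const_mul _), integral_const_mul, integral_const_mul,
    div_mul_cancel₀ _ hZ.ne']
  ring

lemma neg_div_sub_log_ge_of_bounds {I J c₁ c₂ c₃ s : ℝ} (hs : 0 < s) (hc₂ : 0 < c₂)
    (hI₂ : c₂ * s ≤ I) (hI₁ : I ≤ c₁ * s) (hJ₀ : 0 ≤ J) (hJ : J ≤ c₃ * s) :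
    -(c₃ / c₂) - Real.log c₁ - Real.log s ≤ -(J / I) - Real.log I := by
  have hI : 0 < I := (mul_pos hc₂ hs).trans_le hI₂
  have hc₁ : 0 < c₁ := pos_of_mul_pos_left (hI.trans_le hI₁) hs.le
  have hJI : J / I ≤ c₃ / c₂ :=
    calc J / I ≤ c₃ * s / (c₂ * s) := div_le_div₀ (hJ₀.trans hJ) hJ (mul_pos hc₂ hs) hI₂
      _ = c₃ / c₂ := mul_div_mul_right _ _ hs.ne'
  have hlogI : Real.log I ≤ Real.log c₁ + Real.log s := by
    rw [← Real.log_mul hc₁.ne' hs.ne']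
    exact Real.log_le_log hI hI₁
  linarith

lemma eventually_half_mul_log_add_le_mul_log {b : ℝ} (hb : 0 < b) (e : ℝ) :
    ∀ᶠ σ in atTop, b / 2 * Real.log σ + e ≤ b * Real.log σ := by
  filter_upwards [(Real.tendsto_log_atTop.const_mul_atTop (half_pos hb)).eventually_ge_atTop e]
    with σ hσ
  linarith

section Kernel

variable {E : Type*} [NormedAddCommGroup E] [NormedSpace ℝ E] [FiniteDimensional ℝ E]
  [MeasurableSpace E] [BorelSpace E] {ν : Measure E} [ν.IsAddHaarMeasure] {μ : Measure E}
  {w : ℝ → ℝ} {θ σ : ℝ} {x : E}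

lemma integral_comp_mul_norm_sub_rpow_le {c : ℝ≥0} (hup : μ ≤ c • ν) {φ : ℝ → ℝ}
    (hφ : ∀ t ≥ 0, 0 ≤ φ t) (h : Integrable (fun y => φ (‖y‖ ^ θ)) ν) (hθ : 0 < θ) (hσ : 0 < σ)
    (x : E) :
    ∫ y, φ (σ * ‖x - y‖ ^ θ) ∂μ ≤ c * (∫ y, φ (‖y‖ ^ θ) ∂ν) * σ ^ (-(finrank ℝ E / θ)) := by
  grw [integral_le_mul_integral_of_le_smul hup (fun y => hφ _ (by positivity))
    (h.comp_mul_norm_sub_rpow hθ hσ x), integral_comp_mul_norm_sub_rpow φ hθ hσ x]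
  exact le_of_eq (by ring)

lemma le_integral_exp_neg_comp_mul_norm_sub_rpow [IsLocallyFiniteMeasure μ] {a : ℝ≥0}
    {δ W : ℝ} (hlow : a • ν.restrict (closedBall x δ) ≤ μ) (hW : ∀ t ∈ Icc (0 : ℝ) 1, w t ≤ W)
    (hθ : 0 < θ) (hσ : 0 < σ) (hσδ : σ ^ (-θ⁻¹) ≤ δ)
    (hK : Integrable (fun y => Real.exp (-w (σ * ‖x - y‖ ^ θ))) μ) :
    a * Real.exp (-W) * ν.real (ball 0 1) * σ ^ (-(finrank ℝ E / θ)) ≤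
      ∫ y, Real.exp (-w (σ * ‖x - y‖ ^ θ)) ∂μ := by
  set r := σ ^ (-θ⁻¹)
  have hr : 0 < r := Real.rpow_pos_of_pos hσ _
  have hrn : r ^ finrank ℝ E = σ ^ (-(finrank ℝ E / θ)) := by
    rw [← Real.rpow_natCast, ← Real.rpow_mul hσ.le]
    ring_nf
  have hball : ∀ y ∈ closedBall x r, Real.exp (-W) ≤ Real.exp (-w (σ * ‖x - y‖ ^ θ)) := by
    intro y hy
    refine Real.exp_le_exp.2 (neg_le_neg (hW _ ⟨by positivity, ?_⟩))
    calc σ * ‖x - y‖ ^ θ ≤ σ * r ^ θ := by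
          gcongr
          rw [norm_sub_rev, ← dist_eq_norm]
          exact hy
      _ = 1 := by rw [← Real.rpow_mul hσ.le, neg_mul, inv_mul_cancel₀ hθ.ne', Real.rpow_neg_one,
          mul_inv_cancel₀ hσ.ne']
  have hμball : a * ν.real (closedBall x r) ≤ μ.real (closedBall x r) := by
    have := hlow (closedBall x r)
    rw [Measure.coe_nnreal_smul_apply, Measure.restrict_apply measurableSet_closedBall,
      inter_eq_left.2 (closedBall_subset_closedBall hσδ)] at this
    simpa [measureReal_def] using
      ENNReal.toReal_mono measure_closedBall_lt_top.ne this
  calc a * Real.exp (-W) * ν.real (ball 0 1) * σ ^ (-(finrank ℝ E / θ))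
      = Real.exp (-W) * (a * ν.real (closedBall x r)) := by
        rw [Measure.addHaar_real_closedBall ν x hr.le, hrn]
        ring
    _ ≤ Real.exp (-W) * μ.real (closedBall x r) := by gcongr
    _ ≤ ∫ y in closedBall x r, Real.exp (-w (σ * ‖x - y‖ ^ θ)) ∂μ :=
        setIntegral_ge_of_const_le_real measurableSet_closedBall measure_closedBall_lt_top.ne
          hball hK.integrableOn
    _ ≤ ∫ y, Real.exp (-w (σ * ‖x - y‖ ^ θ)) ∂μ :=
        setIntegral_le_integral hK (ae_of_all _ fun _ => (Real.exp_pos _).le)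

theorem exists_eventually_mul_log_add_le_integral_mul_log_gibbs [Nontrivial E] {c a : ℝ≥0}
    {δ : ℝ} (hθ : 0 < θ) (hwc : ContinuousOn w (Ici 0)) (hwnn : ∀ t ≥ (0 : ℝ), 0 ≤ w t)
    (hwlim : Tendsto w atTop atTop)
    (hint : IntegrableOn (fun t => t ^ (finrank ℝ E - 1) * w (t ^ θ) * Real.exp (-w (t ^ θ)))
      (Ioi 0))
    (hup : μ ≤ c • ν) (hlow : a • ν.restrict (closedBall x δ) ≤ μ) (ha : 0 < a) (hδ : 0 < δ) :
    ∃ A, ∀ᶠ σ in atTop, finrank ℝ E / θ * Real.log σ + A ≤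
      ∫ y, Real.exp (-w (σ * ‖x - y‖ ^ θ)) / (∫ y', Real.exp (-w (σ * ‖x - y'‖ ^ θ)) ∂μ) *
        Real.log (Real.exp (-w (σ * ‖x - y‖ ^ θ)) /
          ∫ y', Real.exp (-w (σ * ‖x - y'‖ ^ θ)) ∂μ) ∂μ := by
  have hK : Integrable (fun y : E => Real.exp (-w (‖y‖ ^ θ))) ν :=
    (integrable_fun_norm_addHaar ν (f := fun t => Real.exp (-w (t ^ θ)))).2 <| by
      simpa only [smul_eq_mul] using integrableOn_Ioi_pow_mul_exp_neg_comp_rpow hθ hwc hwlim hint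
  have hwK : Integrable (fun y : E => w (‖y‖ ^ θ) * Real.exp (-w (‖y‖ ^ θ))) ν :=
    (integrable_fun_norm_addHaar ν (f := fun t => w (t ^ θ) * Real.exp (-w (t ^ θ)))).2 <| by
      simpa only [smul_eq_mul, mul_assoc] using hint
  obtain ⟨W, hW⟩ := (isCompact_Icc (a := (0 : ℝ)) (b := 1)).exists_bound_of_continuousOn
    (hwc.mono Icc_subset_Ici_self)
  have := Measure.isLocallyFiniteMeasure_of_le hup
  set c₁ := c * ∫ y, Real.exp (-w (‖y‖ ^ θ)) ∂ν
  set c₂ := a * Real.exp (-W) * ν.real (ball 0 1)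
  set c₃ := c * ∫ y, w (‖y‖ ^ θ) * Real.exp (-w (‖y‖ ^ θ)) ∂ν
  have hc₂ : 0 < c₂ := by
    have : 0 < ν.real (ball 0 1) :=
      ENNReal.toReal_pos (measure_ball_pos ν 0 one_pos).ne' measure_ball_lt_top.ne
    positivity
  refine ⟨-(c₃ / c₂) - Real.log c₁, ?_⟩
  filter_upwards [eventually_gt_atTop 0,
    (tendsto_rpow_neg_atTop (inv_pos.2 hθ)).eventually (Iic_mem_nhds hδ)] with σ hσ hσδ
  have hKμ := (hK.comp_mul_norm_sub_rpow (φ := fun t => Real.exp (-w t)) hθ hσ x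
    ).smul_measure_nnreal.mono_measure hup
  have hwKμ := (hwK.comp_mul_norm_sub_rpow (φ := fun t => w t * Real.exp (-w t)) hθ hσ x
    ).smul_measure_nnreal.mono_measure hup
  have hI₁ := integral_comp_mul_norm_sub_rpow_le hup (φ := fun t => Real.exp (-w t))
    (fun _ _ => (Real.exp_pos _).le) hK hθ hσ x
  have hJ := integral_comp_mul_norm_sub_rpow_le hup (φ := fun t => w t * Real.exp (-w t))
    (fun t ht => mul_nonneg (hwnn t ht) (Real.exp_pos _).le) hwK hθ hσ x
  have hI₂ := le_integral_exp_neg_comp_mul_norm_sub_rpow hlow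
    (fun t ht => (le_abs_self _).trans (hW t ht)) hθ hσ hσδ hKμ
  rw [integral_mul_log_gibbs_eq hKμ hwKμ
    ((mul_pos hc₂ (Real.rpow_pos_of_pos hσ _)).trans_le hI₂)]
  have := neg_div_sub_log_ge_of_bounds (Real.rpow_pos_of_pos hσ _) hc₂ hI₂ hI₁
    (integral_nonneg fun y => mul_nonneg (hwnn _ (by positivity)) (Real.exp_pos _).le) hJ
  rw [Real.log_rpow hσ] at this
  linarith

end Kernel

theorem entropyF_lower_bound_general
    (d : ℕ) (hd : 2 ≤ d) (θ : ℝ) (hθ : 0 < θ) (ρ : ℝ)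
    (f : EuclideanSpace ℝ (Fin d) → ℝ) (hfc : Continuous f)
    (hfb : ∃ M, ∀ x, f x ≤ M) (hfpos : ∀ x, 0 < f x)
    (μ : Measure (EuclideanSpace ℝ (Fin d)))
    (hμ : μ = volume.withDensity (fun x => ENNReal.ofReal (f x)))
    (w w' : ℝ → ℝ)
    (hwnn : ∀ t ≥ (0:ℝ), 0 ≤ w t)
    (hder : ∀ t ≥ (0:ℝ), HasDerivAt w (w' t) t)
    (hwlim : Tendsto w atTop atTop)
    (hint : IntegrableOn
      (fun t => t ^ (d - 1) * w (t ^ θ) * Real.exp (-(w (t ^ θ)))) (Set.Ioi 0))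
    (x : EuclideanSpace ℝ (Fin d)) :
    ∃ C > (0:ℝ), ∃ σ₀ : ℝ, ∀ σ ≥ σ₀,
      C * Real.log σ - Real.log (f x) + Real.log ρ ≤ entropyF w θ ρ μ x σ := by
  obtain ⟨M, hM⟩ := hfb
  have : Nontrivial (EuclideanSpace ℝ (Fin d)) :=
    have : Nonempty (Fin d) := ⟨⟨0, by omega⟩⟩
    inferInstance
  obtain ⟨δ, hδ, hδf⟩ : ∃ δ > 0, ∀ y ∈ closedBall x δ, f x / 2 ≤ f y :=
    nhds_basis_closedBall.eventually_iff.1 <| hfc.continuousAt.eventually <|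
      Ici_mem_nhds (half_lt_self (hfpos x))
  obtain ⟨A, hA⟩ := exists_eventually_mul_log_add_le_integral_mul_log_gibbs (ν := volume)
    (c := M.toNNReal) (a := (f x / 2).toNNReal) hθ
    (fun t ht => (hder t ht).continuousAt.continuousWithinAt) hwnn hwlim
    (by rwa [finrank_euclideanSpace_fin])
    (hμ ▸ withDensity_ofReal_le_smul fun y => (hM y).trans (Real.le_coe_toNNReal M))
    (hμ ▸ smul_restrict_le_withDensity_ofReal measurableSet_closedBall fun y hy => by
      simpa [Real.coe_toNNReal _ (half_pos (hfpos x)).le] using hδf y hy)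
    (Real.toNNReal_pos.2 (half_pos (hfpos x))) hδ
  rw [finrank_euclideanSpace_fin] at hA
  have hb : (0 : ℝ) < d / θ := by positivity
  obtain ⟨σ₀, hσ₀⟩ := eventually_atTop.1
    (hA.and (eventually_half_mul_log_add_le_mul_log hb (-Real.log (f x) - A)))
  refine ⟨d / θ / 2, half_pos hb, σ₀, fun σ hσ => ?_⟩
  simp only [entropyF, inputKernel]
  linarith [hσ₀ σ hσ]

/-- Lower bound for the entropy functional: under the input kernel conditions there is
`C > 0` with `F(x,σ) ≥ C log σ - log f(x) + log ρ` for all sufficiently large `σ`. -/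
theorem entropyF_lower_bound
    (d : ℕ) (hd : 2 ≤ d) (θ : ℝ) (hθ : 0 < θ) (ρ : ℝ) (hρ : ρ ∈ Set.Ioo (0:ℝ) 1)
    (f : EuclideanSpace ℝ (Fin d) → ℝ) (hfc : Continuous f)
    (hfb : ∃ M, ∀ x, f x ≤ M) (hfpos : ∀ x, 0 < f x)
    (μ : Measure (EuclideanSpace ℝ (Fin d)))
    (hμ : μ = volume.withDensity (fun x => ENNReal.ofReal (f x)))
    (hprob : IsProbabilityMeasure μ)
    (w w' w'' : ℝ → ℝ)
    (hwnn : ∀ t ≥ (0:ℝ), 0 ≤ w t) (hw0 : w 0 = 0)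
    (hder : ∀ t ≥ (0:ℝ), HasDerivAt w (w' t) t)
    (hder' : ∀ t ≥ (0:ℝ), HasDerivAt w' (w'' t) t)
    (hw'pos : ∀ t ≥ (0:ℝ), 0 < w' t)
    (hwlim : Tendsto w atTop atTop)
    (hconv : ∀ t ≥ (0:ℝ), 0 ≤ w' t + t * w'' t)
    (hint : IntegrableOn
      (fun t => t ^ (d - 1) * w (t ^ θ) * Real.exp (-(w (t ^ θ)))) (Set.Ioi 0))
    (x : EuclideanSpace ℝ (Fin d)) :
    ∃ C > (0:ℝ), ∃ σ₀ : ℝ, ∀ σ ≥ σ₀,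
      C * Real.log σ - Real.log (f x) + Real.log ρ ≤ entropyF w θ ρ μ x σ :=
  entropyF_lower_bound_general d hd θ hθ ρ f hfc hfb hfpos μ hμ w w' hwnn hder hwlim hint x
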